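/- arXiv:1912.01793 — 8 statements merged into one kernel-verified Lean document; each statement's English description precedes it below -/
import Mathlib

section
/- Let r, β > 0 be real constants and L1, L2 real with L2 > L1·e^r > e^{2r} and (L2 − L1·e^r)·e^β > (L1 − e^r)·e^r. Then L1 < (L2·e^{β−r} + e^r)/(e^β + 1). Consequently, defining V1* = (L1 − e^r)²/(e^β − 1) and V1# = (M − e^r)²/(e^β − 1) with M = (L2·e^{β−r} + e^r)/(e^β + 1), one has V1* < V1#. -/
/-! `L1 < M` is hypothesis `h3` after clearing the denominators of `M`. Since also
`e^r < L1`, both variances are squares of positive excesses over `e^r` divided by the same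
positive number `e^β - 1`, so they compare as `L1` and `M` do. -/

open Real

theorem lt_weighted_mean_iff {a b x y : ℝ} (ha : 0 < a) (hb : 0 < b + 1) :
    x < (y * b / a + a) / (b + 1) ↔ (x - a) * a < (y - x * a) * b := by
  rw [lt_div_iff₀ hb, ← sub_pos, ← sub_pos (a := (y - x * a) * b)]
  have key : y * b / a + a - x * (b + 1) = ((y - x * a) * b - (x - a) * a) / a := by
    field_simp
    ring
  rw [key, div_pos_iff_of_pos_right ha]

theorem stmt_1_general (r β L1 L2 : ℝ) (hβ : 0 < β)
    (h2 : L1 * exp r > exp (2 * r))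
    (h3 : (L2 - L1 * exp r) * exp β > (L1 - exp r) * exp r) :
    L1 < (L2 * exp (β - r) + exp r) / (exp β + 1) ∧
    (L1 - exp r) ^ 2 / (exp β - 1) <
      ((L2 * exp (β - r) + exp r) / (exp β + 1) - exp r) ^ 2 / (exp β - 1) := by
  have hM : L1 < (L2 * exp (β - r) + exp r) / (exp β + 1) := by
    rw [exp_sub, ← mul_div_assoc, lt_weighted_mean_iff (exp_pos r) (by positivity)]
    exact h3
  have hL1 : exp r < L1 := by
    rw [two_mul, exp_add] at h2
    exact lt_of_mul_lt_mul_right h2 (exp_pos r).le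
  have hden : 0 < exp β - 1 := sub_pos.mpr (one_lt_exp_iff.mpr hβ)
  refine ⟨hM, ?_⟩
  gcongr

theorem stmt_1 (r β L1 L2 : ℝ) (hr : 0 < r) (hβ : 0 < β)
    (h1 : L2 > L1 * exp r) (h2 : L1 * exp r > exp (2 * r))
    (h3 : (L2 - L1 * exp r) * exp β > (L1 - exp r) * exp r) :
    L1 < (L2 * exp (β - r) + exp r) / (exp β + 1) ∧
    (L1 - exp r) ^ 2 / (exp β - 1) <
      ((L2 * exp (β - r) + exp r) / (exp β + 1) - exp r) ^ 2 / (exp β - 1) :=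
  stmt_1_general r β L1 L2 hβ h2 h3
end

section
/- Let r, β > 0 and L1, L2 be reals with e^r < L1 and L1 ≠ (L2·e^{β−r} + e^r)/(e^β + 1). Then the identity V2* := (L1 − e^r)²·e^{2r−β}/(e^β − 1) + (L2 − L1·e^r)²/(e^β − 1) equals ((e^{2r−β} + e^{2r})/(e^β − 1))·(L1 − (L2·e^{β−r} + e^r)/(e^β + 1))² + (L2 − e^{2r})²/(e^{2β} − 1). In particular V2* > (L2 − e^{2r})²/(e^{2β} − 1) whenever L1 ≠ (L2 e^{β−r} + e^r)/(e^β + 1). -/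
/-! With `a = e^r` and `b = e^β > 1` every exponential in the statement is a rational function
of `a` and `b`, and `V₂*` is a quadratic in `L1` with leading coefficient `a²(b + 1)/(b(b - 1)) > 0`.
Completing the square in `L1` leaves exactly the one-constraint variance `(L2 - a²)²/(b² - 1)`,
so the gap is a positive multiple of `(L1 - L1*)²`. -/

open Real

section CompletingSquare

variable {a b : ℝ} (L1 L2 : ℝ)

theorem twoPeriod_variance_eq_sq_add (ha : a ≠ 0) (hb : b ≠ 0) (hb₁ : b - 1 ≠ 0)
    (hb₂ : b + 1 ≠ 0) :
    (L1 - a) ^ 2 * (a ^ 2 / b) / (b - 1) + (L2 - L1 * a) ^ 2 / (b - 1)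
      = ((a ^ 2 / b + a ^ 2) / (b - 1)) * (L1 - (L2 * (b / a) + a) / (b + 1)) ^ 2
        + (L2 - a ^ 2) ^ 2 / (b ^ 2 - 1) := by
  have hb_sq : b ^ 2 - 1 ≠ 0 := by
    rw [show b ^ 2 - 1 = (b - 1) * (b + 1) by ring]
    exact mul_ne_zero hb₁ hb₂
  field_simp
  ring

theorem twoPeriod_variance_gt {L1 : ℝ} (ha : a ≠ 0) (hb : 1 < b)
    (hne : L1 ≠ (L2 * (b / a) + a) / (b + 1)) :
    (L1 - a) ^ 2 * (a ^ 2 / b) / (b - 1) + (L2 - L1 * a) ^ 2 / (b - 1)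
      > (L2 - a ^ 2) ^ 2 / (b ^ 2 - 1) := by
  have hb₀ : 0 < b := one_pos.trans hb
  have hb₁ : 0 < b - 1 := sub_pos.mpr hb
  rw [twoPeriod_variance_eq_sq_add L1 L2 ha hb₀.ne' hb₁.ne' (by positivity)]
  have hcoeff : 0 < (a ^ 2 / b + a ^ 2) / (b - 1) := by positivity
  have hsq : 0 < (L1 - (L2 * (b / a) + a) / (b + 1)) ^ 2 := by
    have := sub_ne_zero.mpr hne
    positivity
  linarith [mul_pos hcoeff hsq]

end CompletingSquare

theorem stmt_2_general (r β L1 L2 : ℝ) (hβ : 0 < β)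
    (hne : L1 ≠ (L2 * exp (β - r) + exp r) / (exp β + 1)) :
    (L1 - exp r) ^ 2 * exp (2 * r - β) / (exp β - 1)
      + (L2 - L1 * exp r) ^ 2 / (exp β - 1)
    = ((exp (2 * r - β) + exp (2 * r)) / (exp β - 1)) *
        (L1 - (L2 * exp (β - r) + exp r) / (exp β + 1)) ^ 2
      + (L2 - exp (2 * r)) ^ 2 / (exp (2 * β) - 1) ∧
    (L1 - exp r) ^ 2 * exp (2 * r - β) / (exp β - 1)
      + (L2 - L1 * exp r) ^ 2 / (exp β - 1)
    > (L2 - exp (2 * r)) ^ 2 / (exp (2 * β) - 1) := by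
  have hsq (x : ℝ) : exp (2 * x) = exp x ^ 2 := by exact_mod_cast exp_nat_mul x 2
  have hdiv : exp (2 * r - β) = exp r ^ 2 / exp β := by rw [exp_sub, hsq]
  rw [exp_sub] at hne
  rw [hdiv, hsq, hsq, exp_sub]
  have hb : 1 < exp β := one_lt_exp_iff.mpr hβ
  exact ⟨twoPeriod_variance_eq_sq_add L1 L2 (exp_ne_zero r) (exp_ne_zero β)
      (sub_pos.mpr hb).ne' (by positivity),
    twoPeriod_variance_gt L2 (exp_ne_zero r) hb hne⟩

theorem stmt_2 (r β L1 L2 : ℝ) (hr : 0 < r) (hβ : 0 < β)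
    (hL1 : exp r < L1)
    (hne : L1 ≠ (L2 * exp (β - r) + exp r) / (exp β + 1)) :
    (L1 - exp r) ^ 2 * exp (2 * r - β) / (exp β - 1)
      + (L2 - L1 * exp r) ^ 2 / (exp β - 1)
    = ((exp (2 * r - β) + exp (2 * r)) / (exp β - 1)) *
        (L1 - (L2 * exp (β - r) + exp r) / (exp β + 1)) ^ 2
      + (L2 - exp (2 * r)) ^ 2 / (exp (2 * β) - 1) ∧
    (L1 - exp r) ^ 2 * exp (2 * r - β) / (exp β - 1)
      + (L2 - L1 * exp r) ^ 2 / (exp β - 1)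
    > (L2 - exp (2 * r)) ^ 2 / (exp (2 * β) - 1) :=
  stmt_2_general r β L1 L2 hβ hne
end

section
/- Let r, β > 0 and L2 > e^{2r}. If (L2 + e^{2r−β} + 1)/(e^{r−β} + e^r + e^{−r}) ≤ L1 < (L2 + e^{2r−β})/(e^{r−β} + e^r), then (L1 − e^r)²(e^{2r−β} + 1)/(e^β − 1) + (L2 − L1 e^r)²/(e^β − 1) < (M − e^r)²(e^{2r−β} + 1)/(e^β − 1) + (L2 − M e^r)²/(e^β − 1), where M = (L2 + e^{2r−β})/(e^{r−β} + e^r). -/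
open Real

/-!
Both sides are `f(x) / (e^β - 1)` for the upward parabola `f(x) = (x - e^r)² A + (L2 - x e^r)²`,
`A = e^{2r-β} + 1`, evaluated at `x = L1` and at `x = M`. The lower bound on `L1` says exactly that
`L1` lies to the right of the vertex of `f`, and `L1 < M`, so monotonicity of `f` there gives the claim.
-/

theorem strictMonoOn_sq_mul_add_sq {A a p q : ℝ} (h : 0 < A + a ^ 2) :
    StrictMonoOn (fun x => (x - p) ^ 2 * A + (q - x * a) ^ 2)
      (Set.Ici ((A * p + a * q) / (A + a ^ 2))) := by
  intro x hx y hy hxy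
  rw [Set.mem_Ici, div_le_iff₀ h] at hx hy
  have hdiff : (y - p) ^ 2 * A + (q - y * a) ^ 2 - ((x - p) ^ 2 * A + (q - x * a) ^ 2)
      = (y - x) * ((A + a ^ 2) * (x + y) - 2 * (A * p + a * q)) := by ring
  have hfactor : 0 < (A + a ^ 2) * (x + y) - 2 * (A * p + a * q) := by
    nlinarith [mul_lt_mul_of_pos_left hxy h]
  have := mul_pos (sub_pos.2 hxy) hfactor
  dsimp only
  linarith

theorem stmt_5_general (r β L1 L2 : ℝ) (hβ : 0 < β)
    (hlow : (L2 + exp (2 * r - β) + 1) / (exp (r - β) + exp r + exp (-r)) ≤ L1)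
    (hhigh : L1 < (L2 + exp (2 * r - β)) / (exp (r - β) + exp r)) :
    (L1 - exp r) ^ 2 * (exp (2 * r - β) + 1) / (exp β - 1)
      + (L2 - L1 * exp r) ^ 2 / (exp β - 1)
    < ((L2 + exp (2 * r - β)) / (exp (r - β) + exp r) - exp r) ^ 2
        * (exp (2 * r - β) + 1) / (exp β - 1)
      + (L2 - ((L2 + exp (2 * r - β)) / (exp (r - β) + exp r)) * exp r) ^ 2
        / (exp β - 1) := by
  set A := exp (2 * r - β) + 1
  have hA : 0 < A + exp r ^ 2 := by positivity
  -- Multiplying numerator and denominator of the lower bound by `exp r` turns it into the vertex.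
  have hvertex : (A * exp r + exp r * L2) / (A + exp r ^ 2) ≤ L1 := by
    convert hlow using 1
    rw [div_eq_div_iff hA.ne' (by positivity)]
    simp only [A, show 2 * r - β = (r - β) + r by ring, exp_add, exp_neg]
    field_simp
    ring
  have hmono := strictMonoOn_sq_mul_add_sq (p := exp r) (q := L2) hA hvertex
    (hvertex.trans hhigh.le) hhigh
  rw [← add_div, ← add_div, div_lt_div_iff_of_pos_right (by simpa using hβ)]
  exact hmono

theorem stmt_5 (r β L1 L2 : ℝ) (hr : 0 < r) (hβ : 0 < β)
    (hL2 : L2 > exp (2 * r))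
    (hmean1 : L2 > L1 * exp r) (hmean2 : L1 * exp r > exp (2 * r))
    (hlow : (L2 + exp (2 * r - β) + 1) / (exp (r - β) + exp r + exp (-r)) ≤ L1)
    (hhigh : L1 < (L2 + exp (2 * r - β)) / (exp (r - β) + exp r)) :
    (L1 - exp r) ^ 2 * (exp (2 * r - β) + 1) / (exp β - 1)
      + (L2 - L1 * exp r) ^ 2 / (exp β - 1)
    < ((L2 + exp (2 * r - β)) / (exp (r - β) + exp r) - exp r) ^ 2
        * (exp (2 * r - β) + 1) / (exp β - 1)
      + (L2 - ((L2 + exp (2 * r - β)) / (exp (r - β) + exp r)) * exp r) ^ 2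
        / (exp β - 1) :=
  stmt_5_general r β L1 L2 hβ hlow hhigh
end

section
/- Let r : ℝ → ℝ and β : ℝ → ℝ be continuous on [t_{i-1}, t_i], let P_i solve the linear ODE dP_i(t)/dt = (β(t) − 2r(t))P_i(t) with terminal value P_i(t_i) > 0, and let g_i solve dg_i(t)/dt = (β(t) − r(t))g_i(t) − ρ_i r(t) P_i(t) with terminal value g_i(t_i). Then for all t ∈ [t_{i-1}, t_i], g_i(t)/P_i(t) = (g_i(t_i)/P_i(t_i))·exp(−∫_t^{t_i} r(s) ds) + ρ_i·(1 − exp(−∫_t^{t_i} r(s) ds)). -/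
/-!
`P` solves a homogeneous linear ODE with continuous coefficient, so `P t = exp (-∫ₜᵇ (β - 2r)) * P b > 0`.
Subtracting `ρ P` removes the forcing term: `h = g - ρ P` solves `h' = (β - r) h`. The quotient of
solutions of `h' = γ h` and `P' = δ P` solves `q' = (γ - δ) q`, so `q = h / P` solves `q' = r q`,
whence `q t = exp (-∫ₜᵇ r) * q b`, and `g / P = ρ + q`.
-/

open Real Set intervalIntegral

section LinearODE

variable {E : Type*} [NormedAddCommGroup E] [NormedSpace ℝ E]

theorem hasDerivWithinAt_integral_Icc_left [CompleteSpace E] {a b x : ℝ} {c : ℝ → E}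
    (hc : ContinuousOn c (Icc a b)) (hx : x ∈ Icc a b) :
    HasDerivWithinAt (fun u => ∫ s in u..b, c s) (-c x) (Icc a b) x := by
  have : Fact (x ∈ Icc a b) := ⟨hx⟩
  exact integral_hasDerivWithinAt_left
    (hc.mono (uIcc_subset_Icc hx (right_mem_Icc.2 (hx.1.trans hx.2)))).intervalIntegrable
    (hc.stronglyMeasurableAtFilter_nhdsWithin measurableSet_Icc x) (hc x hx)

theorem eq_of_hasDerivWithinAt_Icc_zero {a b : ℝ} {F : ℝ → E}
    (hF : ∀ x ∈ Icc a b, HasDerivWithinAt F 0 (Icc a b) x) :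
    ∀ x ∈ Icc a b, F x = F b := by
  intro x hx
  have hF_cont : ContinuousOn F (Icc a b) := fun y hy => (hF y hy).continuousWithinAt
  have hF_const := constant_of_has_deriv_right_zero hF_cont fun y hy =>
    (hF y (Ico_subset_Icc_self hy)).mono_of_mem_nhdsWithin (Icc_mem_nhdsGE_of_mem hy)
  rw [hF_const x hx, hF_const b (right_mem_Icc.2 (hx.1.trans hx.2))]

theorem eq_exp_neg_integral_smul_of_hasDerivWithinAt {a b : ℝ} {c : ℝ → ℝ} {f : ℝ → E}
    (hc : ContinuousOn c (Icc a b))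
    (hf : ∀ t ∈ Icc a b, HasDerivWithinAt f (c t • f t) (Icc a b) t) :
    ∀ t ∈ Icc a b, f t = exp (-∫ s in t..b, c s) • f b := by
  set F : ℝ → E := fun u => exp (∫ s in u..b, c s) • f u
  have hF : ∀ x ∈ Icc a b, HasDerivWithinAt F 0 (Icc a b) x := by
    intro x hx
    refine ((hasDerivWithinAt_integral_Icc_left hc hx).exp.smul (hf x hx)).congr_deriv ?_
    rw [smul_smul, ← add_smul, mul_neg, add_neg_cancel, zero_smul]
  intro t ht
  have hFt := eq_of_hasDerivWithinAt_Icc_zero hF t ht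
  simp only [F, integral_same, exp_zero, one_smul] at hFt
  rw [← hFt, smul_smul, ← exp_add, neg_add_cancel, exp_zero, one_smul]

theorem HasDerivAt.div_of_linear {h P : ℝ → ℝ} {γ δ x : ℝ} (hh : HasDerivAt h (γ * h x) x)
    (hP : HasDerivAt P (δ * P x) x) (hPx : P x ≠ 0) :
    HasDerivAt (fun t => h t / P t) ((γ - δ) * (h x / P x)) x := by
  refine (hh.div hP hPx).congr_deriv ?_
  field_simp

end LinearODE

theorem stmt_6_general (a b ρ : ℝ) (r β : ℝ → ℝ)
    (hr : ContinuousOn r (Set.Icc a b)) (hβ : ContinuousOn β (Set.Icc a b))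
    (P g : ℝ → ℝ)
    (hP : ∀ t ∈ Set.Icc a b, HasDerivAt P ((β t - 2 * r t) * P t) t)
    (hPb : 0 < P b)
    (hg : ∀ t ∈ Set.Icc a b,
      HasDerivAt g ((β t - r t) * g t - ρ * r t * P t) t) :
    ∀ t ∈ Set.Icc a b,
      g t / P t = (g b / P b) * exp (-(∫ s in t..b, r s))
        + ρ * (1 - exp (-(∫ s in t..b, r s))) := by
  have hP_pos : ∀ t ∈ Icc a b, 0 < P t := fun t ht => by
    rw [eq_exp_neg_integral_smul_of_hasDerivWithinAt (hβ.sub (continuousOn_const.mul hr))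
      (fun s hs => (hP s hs).hasDerivWithinAt) t ht, smul_eq_mul]
    positivity
  have hq : ∀ t ∈ Icc a b, HasDerivWithinAt (fun s => (g s - ρ * P s) / P s)
      (r t • ((g t - ρ * P t) / P t)) (Icc a b) t := by
    intro t ht
    have hh : HasDerivAt (fun s => g s - ρ * P s) ((β t - r t) * (g t - ρ * P t)) t :=
      ((hg t ht).sub ((hP t ht).const_mul ρ)).congr_deriv (by ring)
    refine ((hh.div_of_linear (hP t ht) (hP_pos t ht).ne').congr_deriv ?_).hasDerivWithinAt
    rw [smul_eq_mul]
    ring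
  intro t ht
  have hq_eq := eq_exp_neg_integral_smul_of_hasDerivWithinAt hr hq t ht
  rw [smul_eq_mul, sub_div, sub_div, mul_div_cancel_right₀ _ (hP_pos t ht).ne',
    mul_div_cancel_right₀ _ hPb.ne'] at hq_eq
  linear_combination hq_eq

theorem stmt_6 (a b ρ : ℝ) (hab : a < b) (r β : ℝ → ℝ)
    (hr : ContinuousOn r (Set.Icc a b)) (hβ : ContinuousOn β (Set.Icc a b))
    (P g : ℝ → ℝ)
    (hP : ∀ t ∈ Set.Icc a b, HasDerivAt P ((β t - 2 * r t) * P t) t)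
    (hPb : 0 < P b)
    (hg : ∀ t ∈ Set.Icc a b,
      HasDerivAt g ((β t - r t) * g t - ρ * r t * P t) t) :
    ∀ t ∈ Set.Icc a b,
      g t / P t = (g b / P b) * exp (-(∫ s in t..b, r s))
        + ρ * (1 - exp (-(∫ s in t..b, r s))) :=
  stmt_6_general a b ρ r β hr hβ P g hP hPb hg
end

section
/- Let A = e^{∫(r−β)}, B = e^{∫(2r−β)}, C = e^{−∫β} (integrals over [t_{i-1}, t_i]) with e^{∫β} > 1, and suppose m₁ = m₀·A + c·(1 − C) and v₁ = v₀·B + c²·(1 − C) for reals m₀, m₁, v₀, v₁, c. Then v₁ − m₁² = (v₀ − m₀²)·B + (m₁ − m₀·e^{∫r})²/(e^{∫β} − 1). -/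
/-!
With `C = e^{-∫β}`, the one-step moments are mixtures: `m₁ = C·(m₀ e^{∫r}) + (1 - C)·c` and
`v₁ = C·(v₀ e^{2∫r}) + (1 - C)·c²`. The variance of a two-point mixture splits into the weighted
variance plus `C(1 - C)` times the squared gap of the means, and that gap is recovered from
`m₁ - m₀ e^{∫r} = (1 - C)(c - m₀ e^{∫r})`; finally `C / (1 - C) = 1 / (e^{∫β} - 1)`.
-/

open Real

lemma mix_sq_sub_sq_mix (p a b : ℝ) :
    p * a ^ 2 + (1 - p) * b ^ 2 - (p * a + (1 - p) * b) ^ 2 = p * (1 - p) * (a - b) ^ 2 := by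
  ring

lemma sub_sq_eq_of_mix {C x m₀ m₁ v₀ v₁ c : ℝ} (hC : C ≠ 1)
    (hm : m₁ = C * (m₀ * x) + (1 - C) * c) (hv : v₁ = C * (v₀ * x ^ 2) + (1 - C) * c ^ 2) :
    v₁ - m₁ ^ 2 = (v₀ - m₀ ^ 2) * x ^ 2 * C + (m₁ - m₀ * x) ^ 2 * (C / (1 - C)) := by
  have hC' : 1 - C ≠ 0 := sub_ne_zero.mpr hC.symm
  have hgap : m₁ - m₀ * x = (1 - C) * (c - m₀ * x) := by rw [hm]; ring
  calc v₁ - m₁ ^ 2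
      = (v₀ - m₀ ^ 2) * x ^ 2 * C
        + (C * (m₀ * x) ^ 2 + (1 - C) * c ^ 2 - (C * (m₀ * x) + (1 - C) * c) ^ 2) := by
        rw [hv, hm]; ring
    _ = (v₀ - m₀ ^ 2) * x ^ 2 * C + C * (1 - C) * (m₀ * x - c) ^ 2 := by
        rw [mix_sq_sub_sq_mix]
    _ = (v₀ - m₀ ^ 2) * x ^ 2 * C + (m₁ - m₀ * x) ^ 2 * (C / (1 - C)) := by
        rw [hgap]; field_simp; ring

lemma exp_neg_div_one_sub_exp_neg {a : ℝ} (ha : a ≠ 0) :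
    exp (-a) / (1 - exp (-a)) = 1 / (exp a - 1) := by
  have h : exp a - 1 ≠ 0 := sub_ne_zero.mpr ((exp_eq_one_iff a).not.mpr ha)
  rw [exp_neg]
  field_simp

theorem stmt_8 (ir iβ m₀ m₁ v₀ v₁ c : ℝ) (hβ : 1 < exp iβ)
    (hm : m₁ = m₀ * exp (ir - iβ) + c * (1 - exp (-iβ)))
    (hv : v₁ = v₀ * exp (2 * ir - iβ) + c ^ 2 * (1 - exp (-iβ))) :
    v₁ - m₁ ^ 2 = (v₀ - m₀ ^ 2) * exp (2 * ir - iβ)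
      + (m₁ - m₀ * exp ir) ^ 2 / (exp iβ - 1) := by
  have hβ₀ : iβ ≠ 0 := (one_lt_exp_iff.mp hβ).ne'
  have hC : exp (-iβ) ≠ 1 := (exp_eq_one_iff _).not.mpr (neg_ne_zero.mpr hβ₀)
  have hB : exp (2 * ir - iβ) = exp ir ^ 2 * exp (-iβ) := by
    rw [← exp_nat_mul, ← exp_add]; push_cast; ring_nf
  have hm' : m₁ = exp (-iβ) * (m₀ * exp ir) + (1 - exp (-iβ)) * c := by
    rw [hm, sub_eq_add_neg, exp_add]; ring
  have hv' : v₁ = exp (-iβ) * (v₀ * exp ir ^ 2) + (1 - exp (-iβ)) * c ^ 2 := by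
    rw [hv, hB]; ring
  rw [sub_sq_eq_of_mix hC hm' hv', exp_neg_div_one_sub_exp_neg hβ₀, hB]
  ring
end

section
/- Let r, β > 0 and L1, L2 ∈ ℝ satisfy L2 > L1·e^r > e^{2r} and (L2 − L1·e^r)·e^β > (L1 − e^r)·e^r. Define μ₂ = (e^β − 1)/(L2 − L1·e^r), λ₂ = (L2·e^β − L1·e^r)/(L2 − L1·e^r), and μ₁ = [(e^β − 1)(e^β + λ₂·e^r) − (L1·e^β − e^r)·e^{2r}·μ₂]/((L1 − e^r)·e^β). Then μ₁ > 0 and μ₂ > 0. -/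
/-! Write `E = e^β`, `R = e^r`, `D = L2 - L1 R` and `A = L1 - R`; condition (4.8) says `D > 0`,
`A > 0` and `D E > A R`. Then `μ₂ = (E - 1) / D > 0`, and clearing the denominator of `λ₂` turns
the numerator of `μ₁` into `(E - 1) (E (1 + R) D - R² A) / D`, whose middle factor is positive
because `E (1 + R) D > (1 + R) A R > R² A`. -/

open Real

section TwoPeriod

variable {E R L1 L2 : ℝ}

lemma twoPeriod_mu1_numerator_eq (hD : L2 - L1 * R ≠ 0) :
    (E - 1) * (E + (L2 * E - L1 * R) / (L2 - L1 * R) * R)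
        - (L1 * E - R) * R ^ 2 * ((E - 1) / (L2 - L1 * R))
      = (E - 1) * (E * (1 + R) * (L2 - L1 * R) - R ^ 2 * (L1 - R)) / (L2 - L1 * R) := by
  field_simp
  ring

lemma twoPeriod_mu1_factor_pos (hR : 0 < R) (hA : 0 < L1 - R)
    (h3 : (L2 - L1 * R) * E > (L1 - R) * R) :
    0 < E * (1 + R) * (L2 - L1 * R) - R ^ 2 * (L1 - R) := by
  have hAR : 0 < (L1 - R) * R := mul_pos hA hR
  suffices R ^ 2 * (L1 - R) < E * (1 + R) * (L2 - L1 * R) from sub_pos.mpr this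
  calc R ^ 2 * (L1 - R) < (1 + R) * ((L1 - R) * R) := by nlinarith
    _ < (1 + R) * ((L2 - L1 * R) * E) := by gcongr
    _ = E * (1 + R) * (L2 - L1 * R) := by ring

end TwoPeriod

theorem stmt_11_general (r β L1 L2 : ℝ) (hβ : 0 < β)
    (h1 : L2 > L1 * exp r) (h2 : L1 * exp r > exp (2 * r))
    (h3 : (L2 - L1 * exp r) * exp β > (L1 - exp r) * exp r) :
    0 < ((exp β - 1) * (exp β + ((L2 * exp β - L1 * exp r) / (L2 - L1 * exp r)) * exp r)
          - (L1 * exp β - exp r) * exp (2 * r) * ((exp β - 1) / (L2 - L1 * exp r)))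
        / ((L1 - exp r) * exp β) ∧
    0 < (exp β - 1) / (L2 - L1 * exp r) := by
  have hR : 0 < exp r := exp_pos r
  have hE : 0 < exp β - 1 := sub_pos.mpr (one_lt_exp_iff.mpr hβ)
  have hD : 0 < L2 - L1 * exp r := sub_pos.mpr h1
  have h2r : exp (2 * r) = exp r ^ 2 := by rw [← exp_nat_mul]; norm_num
  have hA : 0 < L1 - exp r := by
    rw [h2r, sq] at h2
    exact sub_pos.mpr (lt_of_mul_lt_mul_right h2 hR.le)
  rw [h2r, twoPeriod_mu1_numerator_eq hD.ne']
  have hfac := twoPeriod_mu1_factor_pos hR hA h3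
  exact ⟨div_pos (div_pos (mul_pos hE hfac) hD) (mul_pos hA (exp_pos β)), div_pos hE hD⟩

theorem stmt_11 (r β L1 L2 : ℝ) (hr : 0 < r) (hβ : 0 < β)
    (h1 : L2 > L1 * exp r) (h2 : L1 * exp r > exp (2 * r))
    (h3 : (L2 - L1 * exp r) * exp β > (L1 - exp r) * exp r) :
    0 < ((exp β - 1) * (exp β + ((L2 * exp β - L1 * exp r) / (L2 - L1 * exp r)) * exp r)
          - (L1 * exp β - exp r) * exp (2 * r) * ((exp β - 1) / (L2 - L1 * exp r)))
        / ((L1 - exp r) * exp β) ∧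
    0 < (exp β - 1) / (L2 - L1 * exp r) :=
  stmt_11_general r β L1 L2 hβ h1 h2 h3
end

section
/- Let r, β > 0, μ₁, μ₂ > 0, λ₁, λ₂ ∈ ℝ. In the two-period example, the time-1 mean satisfies E[Y*(1)] = e^{r−β} + ((λ₁ + λ₂·e^{r−β})/(μ₁ + μ₂·e^{2r−β}))·(1 − e^{−β}). Conversely, given target L1 > e^r and L2 with L2 − L1 e^r > 0 and (L2 − L1 e^r)e^β > (L1 − e^r)e^r, with μ₂, λ₂, μ₁, λ₁ defined by formulas (4.9), one has e^{r−β} + ((λ₁ + λ₂ e^{r−β})/(μ₁ + μ₂ e^{2r−β}))·(1 − e^{−β}) = L1. -/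
/-! With `R = e^r` and `A = e^β`, the parameters (4.9) are rational functions of `R, A, L1, L2`,
and with `D = L2 - L1 R`, `M = L1 - R` they give
`μ₁ + μ₂ R²/A = (A - 1)(1 + R)/M` and `λ₁ + λ₂ R/A = (L1 A - R)(1 + R)/M`,
so the time-1 mean is `R/A + (L1 A - R)/A = L1`. The only denominator whose nonvanishing needs
the hypotheses is `μ₂ R² + μ₁ = (A - 1)(A(1 + R)D + R²M(A - 1))/(DMA)`, positive once
`A > 1`, `D > 0`, `M > 0`. -/

open Real

namespace TwoPeriodMV

variable {K : Type*} [Field K] (R A L1 L2 : K)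

def mu₂ : K := (A - 1) / (L2 - L1 * R)

def lam₂ : K := (L2 * A - L1 * R) / (L2 - L1 * R)

def mu₁ : K :=
  ((A - 1) * (A + lam₂ R A L1 L2 * R) - (L1 * A - R) * R ^ 2 * mu₂ R A L1 L2) / ((L1 - R) * A)

def lam₁ : K :=
  mu₁ R A L1 L2 * (lam₂ R A L1 L2 * (R - R / A) / (mu₂ R A L1 L2 * R ^ 2 + mu₁ R A L1 L2)
      + (mu₂ R A L1 L2 * (R ^ 3 / A) + mu₁ R A L1 L2 * R) / (mu₂ R A L1 L2 * R ^ 2 + mu₁ R A L1 L2))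
    + (mu₂ R A L1 L2 * R ^ 2 + mu₁ R A L1 L2 * A) / (mu₂ R A L1 L2 * R ^ 2 + mu₁ R A L1 L2)

/-- `E[Y*(1)] = e^{r-β} + (λ₁ + λ₂ e^{r-β})/(μ₁ + μ₂ e^{2r-β}) (1 - e^{-β})` with `R = e^r`, `A = e^β`. -/
def timeOneMean (μ₁ μ₂ lam₁ lam₂ : K) : K :=
  R / A + (lam₁ + lam₂ * (R / A)) / (μ₁ + μ₂ * (R ^ 2 / A)) * (1 - A⁻¹)

variable {R A L1 L2}

lemma mu₁_eq (hA : A ≠ 0) (hD : L2 - L1 * R ≠ 0) (hM : L1 - R ≠ 0) :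
    mu₁ R A L1 L2 = (A - 1) * (A * (1 + R) * (L2 - L1 * R) - R ^ 2 * (L1 - R))
      / ((L2 - L1 * R) * (L1 - R) * A) := by
  unfold mu₁ mu₂ lam₂
  field_simp
  ring

lemma mu₂_mul_sq_add_mu₁ (hA : A ≠ 0) (hD : L2 - L1 * R ≠ 0) (hM : L1 - R ≠ 0) :
    mu₂ R A L1 L2 * R ^ 2 + mu₁ R A L1 L2 =
      (A - 1) * (A * (1 + R) * (L2 - L1 * R) + R ^ 2 * (L1 - R) * (A - 1))
        / ((L2 - L1 * R) * (L1 - R) * A) := by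
  rw [mu₁_eq hA hD hM, mu₂]
  field_simp
  ring

lemma mu₁_add_mu₂_mul (hA : A ≠ 0) (hD : L2 - L1 * R ≠ 0) (hM : L1 - R ≠ 0) :
    mu₁ R A L1 L2 + mu₂ R A L1 L2 * (R ^ 2 / A) = (A - 1) * (1 + R) / (L1 - R) := by
  rw [mu₁_eq hA hD hM, mu₂]
  -- as atoms, `D` and `M` are not split up by `field_simp`, which then clears them
  set D := L2 - L1 * R
  set M := L1 - R
  field_simp
  ring

lemma lam₁_add_lam₂_mul (hA : A ≠ 0) (hD : L2 - L1 * R ≠ 0) (hM : L1 - R ≠ 0)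
    (hP : mu₂ R A L1 L2 * R ^ 2 + mu₁ R A L1 L2 ≠ 0) :
    lam₁ R A L1 L2 + lam₂ R A L1 L2 * (R / A) = (L1 * A - R) * (1 + R) / (L1 - R) := by
  have hlam₁ : lam₁ R A L1 L2 * (mu₂ R A L1 L2 * R ^ 2 + mu₁ R A L1 L2) =
      mu₁ R A L1 L2 * (lam₂ R A L1 L2 * (R - R / A)
          + (mu₂ R A L1 L2 * (R ^ 3 / A) + mu₁ R A L1 L2 * R))
        + (mu₂ R A L1 L2 * R ^ 2 + mu₁ R A L1 L2 * A) := by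
    have hP' : R ^ 2 * mu₂ R A L1 L2 + mu₁ R A L1 L2 ≠ 0 := by rwa [mul_comm]
    rw [lam₁]; field_simp
  rw [← eq_sub_iff_add_eq, ← mul_left_inj' hP, hlam₁, mu₂_mul_sq_add_mu₁ hA hD hM,
    mu₁_eq hA hD hM, lam₂, mu₂]
  set D := L2 - L1 * R
  set M := L1 - R
  field_simp
  ring

lemma timeOneMean_eq (hA : A ≠ 0) (hA1 : A - 1 ≠ 0) (hR1 : 1 + R ≠ 0) (hD : L2 - L1 * R ≠ 0)
    (hM : L1 - R ≠ 0) (hP : mu₂ R A L1 L2 * R ^ 2 + mu₁ R A L1 L2 ≠ 0) :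
    timeOneMean R A (mu₁ R A L1 L2) (mu₂ R A L1 L2) (lam₁ R A L1 L2) (lam₂ R A L1 L2) = L1 := by
  rw [timeOneMean, lam₁_add_lam₂_mul hA hD hM hP, mu₁_add_mu₂_mul hA hD hM]
  field_simp
  ring

lemma mu₂_mul_sq_add_mu₁_pos {K : Type*} [Field K] [LinearOrder K] [IsStrictOrderedRing K]
    {R A L1 L2 : K} (hR : 0 < R) (hA : 1 < A) (hD : 0 < L2 - L1 * R) (hM : 0 < L1 - R) :
    0 < mu₂ R A L1 L2 * R ^ 2 + mu₁ R A L1 L2 := by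
  have hA0 : 0 < A := zero_lt_one.trans hA
  have hA1 : 0 < A - 1 := sub_pos.2 hA
  rw [mu₂_mul_sq_add_mu₁ hA0.ne' hD.ne' hM.ne']
  apply div_pos
  · exact mul_pos hA1 (add_pos (by positivity) (by positivity))
  · positivity

end TwoPeriodMV

open TwoPeriodMV in
theorem stmt_13_general (r β L1 L2 : ℝ) (hβ : 0 < β)
    (hL1 : exp r < L1) (h1 : 0 < L2 - L1 * exp r)
    (μ₂ lam₂ μ₁ lam₁ : ℝ)
    (hμ₂ : μ₂ = (exp β - 1) / (L2 - L1 * exp r))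
    (hlam₂ : lam₂ = (L2 * exp β - L1 * exp r) / (L2 - L1 * exp r))
    (hμ₁ : μ₁ = ((exp β - 1) * (exp β + lam₂ * exp r)
        - (L1 * exp β - exp r) * exp (2 * r) * μ₂) / ((L1 - exp r) * exp β))
    (hlam₁ : lam₁ = μ₁ * (lam₂ * (exp r - exp (r - β)) / (μ₂ * exp (2 * r) + μ₁)
        + (μ₂ * exp (3 * r - β) + μ₁ * exp r) / (μ₂ * exp (2 * r) + μ₁))
        + (μ₂ * exp (2 * r) + μ₁ * exp β) / (μ₂ * exp (2 * r) + μ₁)) :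
    exp (r - β)
      + ((lam₁ + lam₂ * exp (r - β)) / (μ₁ + μ₂ * exp (2 * r - β))) * (1 - exp (-β))
    = L1 := by
  have hA : 1 < exp β := one_lt_exp_iff.2 hβ
  have hM : 0 < L1 - exp r := sub_pos.2 hL1
  have h2r : exp (2 * r) = exp r ^ 2 := by rw [← exp_nat_mul]; norm_num
  have h3r : exp (3 * r) = exp r ^ 3 := by rw [← exp_nat_mul]; norm_num
  subst hlam₁ hμ₁ hlam₂ hμ₂
  simp only [exp_sub, exp_neg, h2r, h3r]
  exact timeOneMean_eq (exp_pos β).ne' (sub_pos.2 hA).ne' (by positivity) h1.ne' hM.ne'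
    (mu₂_mul_sq_add_mu₁_pos (exp_pos r) hA h1 hM).ne'

theorem stmt_13 (r β L1 L2 : ℝ) (hr : 0 < r) (hβ : 0 < β)
    (hL1 : exp r < L1) (h1 : 0 < L2 - L1 * exp r)
    (h3 : (L2 - L1 * exp r) * exp β > (L1 - exp r) * exp r)
    (μ₂ lam₂ μ₁ lam₁ : ℝ)
    (hμ₂ : μ₂ = (exp β - 1) / (L2 - L1 * exp r))
    (hlam₂ : lam₂ = (L2 * exp β - L1 * exp r) / (L2 - L1 * exp r))
    (hμ₁ : μ₁ = ((exp β - 1) * (exp β + lam₂ * exp r)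
        - (L1 * exp β - exp r) * exp (2 * r) * μ₂) / ((L1 - exp r) * exp β))
    (hlam₁ : lam₁ = μ₁ * (lam₂ * (exp r - exp (r - β)) / (μ₂ * exp (2 * r) + μ₁)
        + (μ₂ * exp (3 * r - β) + μ₁ * exp r) / (μ₂ * exp (2 * r) + μ₁))
        + (μ₂ * exp (2 * r) + μ₁ * exp β) / (μ₂ * exp (2 * r) + μ₁)) :
    exp (r - β)
      + ((lam₁ + lam₂ * exp (r - β)) / (μ₁ + μ₂ * exp (2 * r - β))) * (1 - exp (-β))
    = L1 :=
  stmt_13_general r β L1 L2 hβ hL1 h1 μ₂ lam₂ μ₁ lam₁ hμ₂ hlam₂ hμ₁ hlam₁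
end

section
/- Let a > 1 (playing the role of e^β), s > 1 (playing e^r, with s² < L2), and L2 > s². Define g(L1) = (L1 − s)²/(a − 1) on the interval (s, (L2·a/s + s)/(a+1)). Then g is strictly increasing in L1 on this interval, and for L1 in this interval, (L2 − L1·s)²/(a−1) + (L1 − s)²·s²/(a·(a−1)) > (L2 − s²)²/(a² − 1), i.e. Var(Y*(2)) > Var(Y#(2)) strictly. -/
/-!
Both variances are quadratics in `L1`, and their difference is the perfect square
`((s²/a + s²)/(a - 1)) · (L1 - (L2·a/s + s)/(a + 1))²` with a positive leading coefficient,
so it vanishes only at the right endpoint of the interval.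
-/

open Set

lemma strictMonoOn_sq_sub_div {c d : ℝ} (hd : 0 < d) :
    StrictMonoOn (fun x : ℝ => (x - c) ^ 2 / d) (Ici c) := by
  intro x hx y hy hxy
  have hx : 0 ≤ x - c := sub_nonneg.mpr hx
  have hxy : x - c < y - c := sub_lt_sub_right hxy c
  exact div_lt_div_of_pos_right (pow_lt_pow_left₀ hxy hx two_ne_zero) hd

lemma variance_sub_eq_sq {a s : ℝ} (L1 L2 : ℝ) (ha : a ≠ 0) (ha₁ : a - 1 ≠ 0) (ha₂ : a + 1 ≠ 0)
    (hs : s ≠ 0) :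
    (L2 - L1 * s) ^ 2 / (a - 1) + (L1 - s) ^ 2 * s ^ 2 / (a * (a - 1))
        - (L2 - s ^ 2) ^ 2 / (a ^ 2 - 1)
      = (s ^ 2 / a + s ^ 2) / (a - 1) * (L1 - (L2 * a / s + s) / (a + 1)) ^ 2 := by
  have ha₃ : a ^ 2 - 1 ≠ 0 := by
    rw [sq, mul_self_sub_one]
    exact mul_ne_zero ha₂ ha₁
  field_simp
  ring

lemma variance_lt_of_ne {a s L1 L2 : ℝ} (ha : 1 < a) (hs : s ≠ 0)
    (hL1 : L1 ≠ (L2 * a / s + s) / (a + 1)) :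
    (L2 - s ^ 2) ^ 2 / (a ^ 2 - 1)
      < (L2 - L1 * s) ^ 2 / (a - 1) + (L1 - s) ^ 2 * s ^ 2 / (a * (a - 1)) := by
  have ha₀ : 0 < a := by linarith
  have ha₁ : 0 < a - 1 := by linarith
  have hcoeff : 0 < (s ^ 2 / a + s ^ 2) / (a - 1) := by positivity
  have hsq : 0 < (L1 - (L2 * a / s + s) / (a + 1)) ^ 2 := by
    positivity [sub_ne_zero.mpr hL1]
  rw [← sub_pos, variance_sub_eq_sq L1 L2 ha₀.ne' ha₁.ne' (by linarith) hs]
  exact mul_pos hcoeff hsq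

theorem stmt_19_general (a s L2 : ℝ) (ha : 1 < a) (hs : 1 < s) :
    StrictMonoOn (fun x : ℝ => (x - s) ^ 2 / (a - 1))
      (Set.Ioo s ((L2 * a / s + s) / (a + 1))) ∧
    ∀ L1 ∈ Set.Ioo s ((L2 * a / s + s) / (a + 1)),
      (L2 - L1 * s) ^ 2 / (a - 1) + (L1 - s) ^ 2 * s ^ 2 / (a * (a - 1))
        > (L2 - s ^ 2) ^ 2 / (a ^ 2 - 1) := by
  refine ⟨(strictMonoOn_sq_sub_div (sub_pos.mpr ha)).mono (Ioo_subset_Icc_self.trans Icc_subset_Ici_self), ?_⟩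
  intro L1 hL1
  exact variance_lt_of_ne ha (by positivity) hL1.2.ne

theorem stmt_19 (a s L2 : ℝ) (ha : 1 < a) (hs : 1 < s) (hL2 : L2 > s ^ 2) :
    StrictMonoOn (fun x : ℝ => (x - s) ^ 2 / (a - 1))
      (Set.Ioo s ((L2 * a / s + s) / (a + 1))) ∧
    ∀ L1 ∈ Set.Ioo s ((L2 * a / s + s) / (a + 1)),
      (L2 - L1 * s) ^ 2 / (a - 1) + (L1 - s) ^ 2 * s ^ 2 / (a * (a - 1))
        > (L2 - s ^ 2) ^ 2 / (a ^ 2 - 1) :=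
  stmt_19_general a s L2 ha hs
end
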